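/- Let G be a chordal graph with a BFS-layering (V_0, V_1, …), let i ≥ 0, and let H be a connected subgraph of the graph induced on the union of layers V_j with j ≥ i. Then the induced subgraph on V(H) ∩ V_i is connected. -/

import Mathlib

/-!
Let `x ≠ y` lie in layer `V_m` and be joined by a walk whose inner vertices lie in higher layers.
Shrink it to a chordless path `P`, and shrink the walk from `y` to `x` along two geodesics through
`r` to a chordless path `Q`, whose inner vertices lie in lower layers. Since an edge changes the
layer by at most one, no inner vertex of `P` equals or is adjacent to one of `Q`; so if `x` and `y`
were not adjacent, `P` followed by `Q` would be a chordless cycle of length at least four. Hence two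
consecutive visits of a walk in `H` to `V_i` are equal or adjacent vertices.
-/

/-- A graph is chordal if every cycle of length at least 4 has a chord: two vertices of the
cycle that are adjacent in the graph by an edge not belonging to the cycle. -/
def IsChordal {V : Type*} (G : SimpleGraph V) : Prop :=
  ∀ ⦃u : V⦄ (w : G.Walk u u), w.IsCycle → 4 ≤ w.length →
    ∃ x y : V, x ∈ w.support ∧ y ∈ w.support ∧ G.Adj x y ∧ s(x, y) ∉ w.edges

namespace SimpleGraph.Walk

variable {V : Type*} {G : SimpleGraph V}

theorem two_le_length_of_adj_of_notMem_edges {a b : V} (p : G.Walk a b) (hab : G.Adj a b)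
    (hp : s(a, b) ∉ p.edges) : 2 ≤ p.length := by
  cases p with
  | nil => exact absurd hab G.irrefl
  | cons _ q =>
    cases q with
    | nil => simp at hp
    | cons _ _ => simp

theorem exists_length_lt_of_append_of_adj {u a b v : V} (Q : G.Walk u a) (R₁ : G.Walk a b)
    (R₂ : G.Walk b v) (hab : G.Adj a b) (hR₁ : s(a, b) ∉ R₁.edges) :
    ∃ q : G.Walk u v, q.length < (Q.append (R₁.append R₂)).length ∧
      q.support ⊆ (Q.append (R₁.append R₂)).support := by
  refine ⟨Q.append (cons hab R₂), ?_, fun z hz => ?_⟩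
  · have := R₁.two_le_length_of_adj_of_notMem_edges hab hR₁
    simp only [length_append, length_cons]
    omega
  · simp only [mem_support_append_iff, support_cons, List.mem_cons] at hz ⊢
    rcases hz with hz | rfl | hz
    · exact Or.inl hz
    · exact Or.inl Q.end_mem_support
    · exact Or.inr (Or.inr hz)

theorem exists_length_lt_of_isChord {u v a b : V} (p : G.Walk u v) (h : p.IsChord s(a, b)) :
    ∃ q : G.Walk u v, q.length < p.length ∧ q.support ⊆ p.support := by
  obtain ⟨hab, hnot, ha, hb⟩ := isChord_sym2Mk.mp h
  obtain ⟨Q, R, rfl⟩ := mem_support_iff_exists_append.mp ha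
  rcases (mem_support_append_iff _ _).mp hb with hb | hb
  · obtain ⟨Q₁, Q₂, rfl⟩ := mem_support_iff_exists_append.mp hb
    rw [← append_assoc]
    refine exists_length_lt_of_append_of_adj Q₁ Q₂ R hab.symm fun hm => hnot ?_
    simp [edges_append, Sym2.eq_swap ▸ hm]
  · obtain ⟨R₁, R₂, rfl⟩ := mem_support_iff_exists_append.mp hb
    exact exists_length_lt_of_append_of_adj Q R₁ R₂ hab fun hm => hnot (by simp [edges_append, hm])

theorem exists_isPath_isChordless_support_subset {u v : V} (p : G.Walk u v) :
    ∃ q : G.Walk u v, q.IsPath ∧ q.IsChordless ∧ q.support ⊆ p.support := by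
  classical
  induction h : p.length using Nat.strong_induction_on generalizing p with
  | _ n ih =>
  by_cases hc : p.bypass.IsChordless
  · exact ⟨p.bypass, p.bypass_isPath, hc, p.support_bypass_subset_support⟩
  obtain ⟨e, he⟩ : ∃ e, p.bypass.IsChord e := by simpa [IsChordless] using hc
  induction e using Sym2.ind with
  | _ a b =>
  obtain ⟨q, hlt, hsub⟩ := p.bypass.exists_length_lt_of_isChord he
  obtain ⟨q', hq', hq'c, hsub'⟩ := ih q.length (h ▸ hlt.trans_le p.length_bypass_le_length) q rfl
  exact ⟨q', hq', hq'c, fun z hz => p.support_bypass_subset_support (hsub (hsub' hz))⟩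

theorem dist_lt_of_mem_support_of_length_eq_dist {u v z : V} (p : G.Walk u v)
    (hp : p.length = G.dist u v) (hz : z ∈ p.support) (hzv : z ≠ v) :
    G.dist u z < G.dist u v := by
  obtain ⟨p₁, p₂, rfl⟩ := mem_support_iff_exists_append.mp hz
  have hp₂ : p₂.length ≠ 0 := fun h => hzv (eq_of_length_eq_zero h)
  have := dist_le p₁
  rw [length_append] at hp
  omega

theorem IsPath.ne_start_of_mem_support_tail {x y z : V} {p : G.Walk x y} (hp : p.IsPath)
    (hz : z ∈ p.support.tail) : z ≠ x := by
  rintro rfl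
  have := hp.support_nodup
  rw [← p.cons_tail_support] at this
  exact (List.nodup_cons.mp this).1 hz

end SimpleGraph.Walk

open SimpleGraph Walk

namespace IsChordal

variable {V : Type*} {G : SimpleGraph V}

theorem adj_of_isChordless (hch : IsChordal G)
    {x y : V} {p : G.Walk x y} {q : G.Walk y x} (hp : p.IsPath) (hq : q.IsPath)
    (hpc : p.IsChordless) (hqc : q.IsChordless)
    (hsep : ∀ a ∈ p.support, ∀ b ∈ q.support, a ≠ x → a ≠ y → b ≠ x → b ≠ y →
      a ≠ b ∧ ¬G.Adj a b)
    (hxy : x ≠ y) : G.Adj x y := by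
  by_contra hnadj
  have hp₀ : p.length ≠ 0 := fun h => hxy (eq_of_length_eq_zero h)
  have hp₁ : p.length ≠ 1 := fun h => hnadj (adj_of_length_eq_one h)
  have hq₀ : q.length ≠ 0 := fun h => hxy (eq_of_length_eq_zero h).symm
  have hq₁ : q.length ≠ 1 := fun h => hnadj (adj_of_length_eq_one h).symm
  have hcyc : (p.append q).IsCycle := by
    refine hp.isCycle_append hq (fun z hzp hzq => ?_) (by omega)
    have hzx := hp.ne_start_of_mem_support_tail hzp
    have hzy := hq.ne_start_of_mem_support_tail hzq
    exact (hsep z (List.mem_of_mem_tail hzp) z (List.mem_of_mem_tail hzq) hzx hzy hzx hzy).1 rfl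
  obtain ⟨a, b, ha, hb, hab, hnot⟩ := hch _ hcyc (by rw [length_append]; omega)
  have hcross : ∀ a ∈ p.support, ∀ b ∈ q.support, G.Adj a b → s(a, b) ∈ (p.append q).edges := by
    intro a ha b hb hab
    rw [edges_append, List.mem_append]
    by_cases hax : a = x ∨ a = y
    · have : a ∈ q.support := by rcases hax with rfl | rfl <;> simp
      exact Or.inr (hqc.mem_edges this hb hab)
    by_cases hbx : b = x ∨ b = y
    · have : b ∈ p.support := by rcases hbx with rfl | rfl <;> simp
      exact Or.inl (hpc.mem_edges ha this hab)
    rw [not_or] at hax hbx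
    exact absurd hab (hsep a ha b hb hax.1 hax.2 hbx.1 hbx.2).2
  rw [mem_support_append_iff] at ha hb
  refine hnot ?_
  rcases ha with ha | ha <;> rcases hb with hb | hb
  · exact edges_append p q ▸ List.mem_append_left _ (hpc.mem_edges ha hb hab)
  · exact hcross a ha b hb hab
  · exact Sym2.eq_swap ▸ hcross b hb a ha hab.symm
  · exact edges_append p q ▸ List.mem_append_right _ (hqc.mem_edges ha hb hab)

theorem adj_of_walk_above_layer (hch : IsChordal G)
    (hG : G.Connected) {r x y : V} (w : G.Walk x y) (hdist : G.dist r x = G.dist r y)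
    (hw : ∀ z ∈ w.support, z ≠ x → z ≠ y → G.dist r x < G.dist r z) (hxy : x ≠ y) :
    G.Adj x y := by
  obtain ⟨gx, hgx⟩ := hG.exists_walk_length_eq_dist r x
  obtain ⟨gy, hgy⟩ := hG.exists_walk_length_eq_dist r y
  have hbelow : ∀ z ∈ (gy.reverse.append gx).support, z ≠ x → z ≠ y →
      G.dist r z < G.dist r x := by
    intro z hz hzx hzy
    rw [mem_support_append_iff, support_reverse, List.mem_reverse] at hz
    rcases hz with hz | hz
    · exact hdist ▸ gy.dist_lt_of_mem_support_of_length_eq_dist hgy hz hzy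
    · exact gx.dist_lt_of_mem_support_of_length_eq_dist hgx hz hzx
  obtain ⟨p, hp, hpc, hpw⟩ := w.exists_isPath_isChordless_support_subset
  obtain ⟨q, hq, hqc, hqg⟩ := (gy.reverse.append gx).exists_isPath_isChordless_support_subset
  refine hch.adj_of_isChordless hp hq hpc hqc (fun a ha b hb hax hay hbx hby => ?_) hxy
  have ha' := hw a (hpw ha) hax hay
  have hb' := hbelow b (hqg hb) hbx hby
  refine ⟨by rintro rfl; omega, fun hab => ?_⟩
  rcases hab.diff_dist_adj (u := r) with h | h | h <;> omega

/-- `q` is the part of a walk in `S` since its last visit to layer `i`, which was at `u`. -/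
theorem reachable_induce_layer (hch : IsChordal G)
    (hG : G.Connected) {r : V} {i : ℕ} {S : Set V} {u a v : V}
    (hu : u ∈ S ∩ {z | G.dist r z = i}) (hv : v ∈ S ∩ {z | G.dist r z = i})
    (q : G.Walk u a) (hq : ∀ z ∈ q.support, z ≠ u → i < G.dist r z)
    (w : G.Walk a v) (hw : ∀ z ∈ w.support, z ∈ S ∧ i ≤ G.dist r z) :
    (G.induce (S ∩ {z | G.dist r z = i})).Reachable ⟨u, hu⟩ ⟨v, hv⟩ := by
  induction w generalizing u with
  | @nil v =>
    obtain rfl : u = v := by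
      by_contra h
      have := hq _ q.end_mem_support (Ne.symm h)
      have : G.dist r v = i := hv.2
      omega
    rfl
  | @cons a b v h w ih =>
    have hb := hw b (by simp)
    have hw' : ∀ z ∈ w.support, z ∈ S ∧ i ≤ G.dist r z := fun z hz => hw z (by simp [hz])
    by_cases hbi : G.dist r b = i
    · have hub : (G.induce (S ∩ {z | G.dist r z = i})).Reachable ⟨u, hu⟩ ⟨b, hb.1, hbi⟩ := by
        by_cases hub : u = b
        · subst hub; rfl
        refine Adj.reachable (induce_adj.mpr ?_)
        refine hch.adj_of_walk_above_layer hG (q.concat h) (hu.2.trans hbi.symm)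
          (fun z hz hzu hzb => ?_) hub
        rw [support_concat, List.mem_append, List.mem_singleton] at hz
        rcases hz with hz | rfl
        · exact hu.2 ▸ hq z hz hzu
        · exact absurd rfl hzb
      exact hub.trans (ih ⟨hb.1, hbi⟩ hv nil (by simp) hw')
    · refine ih hu hv (q.concat h) (fun z hz hzu => ?_) hw'
      rw [support_concat, List.mem_append, List.mem_singleton] at hz
      rcases hz with hz | rfl
      · exact hq z hz hzu
      · omega

end IsChordal

theorem layer_intersection_connected_general {V : Type*} (G : SimpleGraph V)
    (hG : G.Connected) (hch : IsChordal G) (r : V) (i : ℕ)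
    (H : G.Subgraph) (hH : H.Connected) (hHv : ∀ v ∈ H.verts, i ≤ G.dist r v) :
    (G.induce (H.verts ∩ {v | G.dist r v = i})).Preconnected := by
  rintro ⟨u, hu⟩ ⟨v, hv⟩
  obtain ⟨w, hwH⟩ := H.preconnected_iff_forall_exists_walk_subgraph.mp hH.preconnected hu.1 hv.1
  refine hch.reachable_induce_layer hG hu hv nil (by simp) w fun z hz => ?_
  have hzH : z ∈ H.verts := hwH.1 (w.mem_verts_toSubgraph.mpr hz)
  exact ⟨hzH, hHv z hzH⟩

/-- In a connected chordal graph with BFS-layering `(V_0, V_1, …)` rooted at `r`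
(layer `V_i` is the set of vertices at distance exactly `i` from `r`), if `H` is a
connected subgraph contained in the union of the layers `V_j` with `j ≥ i`, then the
subgraph induced on `V(H) ∩ V_i` is connected. -/
theorem layer_intersection_connected {V : Type*} [Fintype V] (G : SimpleGraph V)
    (hG : G.Connected) (hch : IsChordal G) (r : V) (i : ℕ)
    (H : G.Subgraph) (hH : H.Connected) (hHv : ∀ v ∈ H.verts, i ≤ G.dist r v) :
    (G.induce (H.verts ∩ {v | G.dist r v = i})).Preconnected :=
  layer_intersection_connected_general G hG hch r i H hH hHv
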